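/- arXiv:2012.04348 — 3 statements merged into one kernel-verified Lean document; each statement's English description precedes it below -/
import Mathlib

section
/- Let Q and B be nonempty topological spaces and f a homeomorphism of Q × B such that: for every y ∈ B there exists y' ∈ B with f(Q × {y}) = Q × {y'}, and for every z ∈ Q there exists z' ∈ Q with f({z} × B) = {z'} × B. Then there exist homeomorphisms φ of Q and ψ of B such that f(z, y) = (φ(z), ψ(y)) for all (z, y) ∈ Q × B. -/
/-- Let `Q` and `B` be nonempty topological spaces and `f` a homeomorphism of `Q × B` such
that: for every `y ∈ B` there exists `y' ∈ B` with `f(Q × {y}) = Q × {y'}`, and for every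
`z ∈ Q` there exists `z' ∈ Q` with `f({z} × B) = {z'} × B`. Then there exist homeomorphisms
`φ` of `Q` and `ψ` of `B` such that `f(z, y) = (φ(z), ψ(y))` for all `(z, y) ∈ Q × B`. -/
theorem homeomorph_prod_split {Q B : Type*} [TopologicalSpace Q] [TopologicalSpace B]
    [Nonempty Q] [Nonempty B] (f : (Q × B) ≃ₜ (Q × B))
    (h1 : ∀ y : B, ∃ y' : B, ⇑f '' (Set.univ ×ˢ {y}) = Set.univ ×ˢ {y'})
    (h2 : ∀ z : Q, ∃ z' : Q, ⇑f '' ({z} ×ˢ Set.univ) = {z'} ×ˢ Set.univ) :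
    ∃ (φ : Q ≃ₜ Q) (ψ : B ≃ₜ B), ∀ (z : Q) (y : B), f (z, y) = (φ z, ψ y) := by
  obtain ⟨z0⟩ := ‹Nonempty Q›
  obtain ⟨b0⟩ := ‹Nonempty B›
  -- second coordinate depends only on y
  have hA : ∀ (z z' : Q) (y : B), (f (z, y)).2 = (f (z', y)).2 := by
    intro z z' y
    obtain ⟨y', hy'⟩ := h1 y
    have hmem : ∀ w : Q, f (w, y) ∈ (Set.univ ×ˢ {y'} : Set (Q × B)) := by
      intro w
      rw [← hy']
      exact Set.mem_image_of_mem _ (by simp)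
    have h1' := (hmem z).2
    have h2' := (hmem z').2
    simp only [Set.mem_singleton_iff] at h1' h2'
    rw [h1', h2']
  have hB : ∀ (z : Q) (y y' : B), (f (z, y)).1 = (f (z, y')).1 := by
    intro z y y'
    obtain ⟨z', hz'⟩ := h2 z
    have hmem : ∀ w : B, f (z, w) ∈ ({z'} ×ˢ Set.univ : Set (Q × B)) := by
      intro w
      rw [← hz']
      exact Set.mem_image_of_mem _ (by simp)
    have h1' := (hmem y).1
    have h2' := (hmem y').1
    simp only [Set.mem_singleton_iff] at h1' h2'
    rw [h1', h2']
  set φf : Q → Q := fun z => (f (z, b0)).1 with hφf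
  set ψf : B → B := fun y => (f (z0, y)).2 with hψf
  have key : ∀ (z : Q) (y : B), f (z, y) = (φf z, ψf y) := by
    intro z y
    have := hB z y b0
    have := hA z z0 y
    exact Prod.ext (by simpa using hB z y b0) (by simpa using hA z z0 y)
  set φi : Q → Q := fun u => (f.symm (u, ψf b0)).1 with hφi
  set ψi : B → B := fun v => (f.symm (φf z0, v)).2 with hψi
  have hφ_left : ∀ z, φi (φf z) = z := by
    intro z
    have : f.symm (φf z, ψf b0) = (z, b0) := by
      rw [← key z b0]; exact f.symm_apply_apply _
    simp [hφi, this]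
  have hφ_right : ∀ u, φf (φi u) = u := by
    intro u
    set p := f.symm (u, ψf b0) with hp
    have hfp : f p = (u, ψf b0) := f.apply_symm_apply _
    have : f p = (φf p.1, ψf p.2) := by rw [show p = (p.1, p.2) from rfl] at hfp ⊢; exact key _ _
    have := hfp.symm.trans this
    exact (congrArg Prod.fst this).symm
  have hψ_left : ∀ y, ψi (ψf y) = y := by
    intro y
    have : f.symm (φf z0, ψf y) = (z0, y) := by
      rw [← key z0 y]; exact f.symm_apply_apply _
    simp [hψi, this]
  have hψ_right : ∀ v, ψf (ψi v) = v := by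
    intro v
    set p := f.symm (φf z0, v) with hp
    have hfp : f p = (φf z0, v) := f.apply_symm_apply _
    have : f p = (φf p.1, ψf p.2) := by rw [show p = (p.1, p.2) from rfl] at hfp ⊢; exact key _ _
    have := hfp.symm.trans this
    exact (congrArg Prod.snd this).symm
  refine ⟨⟨⟨φf, φi, hφ_left, hφ_right⟩, ?_, ?_⟩,
          ⟨⟨ψf, ψi, hψ_left, hψ_right⟩, ?_, ?_⟩, key⟩
  · exact (continuous_fst.comp f.continuous).comp (continuous_id.prodMk continuous_const)
  · exact (continuous_fst.comp f.symm.continuous).comp (continuous_id.prodMk continuous_const)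
  · exact (continuous_snd.comp f.continuous).comp (continuous_const.prodMk continuous_id)
  · exact (continuous_snd.comp f.symm.continuous).comp (continuous_const.prodMk continuous_id)
end

section
/- Let Q and B be nonempty topological spaces and Γ a subgroup of Homeomorph(Q × B) all of whose elements are of product form; let Ψ := { ψ_g : g ∈ Γ } ⊆ Homeomorph(B), and let Z(Ψ) be the centralizer of Ψ in Homeomorph(B). For each h ∈ Z(Ψ) there is a unique homeomorphism h̄ of (Q × B)/Γ with κ ∘ (id_Q × h) = h̄ ∘ κ, and the assignment h ↦ h̄ is a group homomorphism from Z(Ψ) to Homeomorph((Q × B)/Γ). -/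
/-!
An element `f` of the normalizer of `Γ` maps orbits to orbits, since `f (γ x) = (f γ f⁻¹) (f x)`,
so it descends to a homeomorphism of `X/Γ`, and this is a homomorphism on the normalizer. For
`h` in the centralizer of `Ψ`, the map `id_Q × h` commutes with every `g = φ_g × ψ_g` of `Γ`,
hence lies in the centralizer, a fortiori in the normalizer, of `Γ`; uniqueness of `h̄` holds
because `κ` is surjective.
-/

namespace Homeomorph

variable {X : Type*} [TopologicalSpace X]

instance instGroup' : Group (X ≃ₜ X) where
  mul f g := g.trans f
  one := Homeomorph.refl X
  inv := Homeomorph.symm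
  mul_assoc _ _ _ := rfl
  one_mul f := ext fun _ => rfl
  mul_one f := ext fun _ => rfl
  inv_mul_cancel f := self_trans_symm f

@[simp] theorem mul_apply' (f g : X ≃ₜ X) (x : X) : (f * g) x = f (g x) := rfl

@[simp] theorem one_apply' (x : X) : (1 : X ≃ₜ X) x = x := rfl

@[simp] theorem inv_def' (f : X ≃ₜ X) : f⁻¹ = f.symm := rfl

/-- The orbit equivalence relation of a subgroup of the homeomorphism group of `X`;
its quotient is the orbit space `X/Γ`, endowed with the quotient topology. -/
def orbitSetoid (Γ : Subgroup (X ≃ₜ X)) : Setoid X where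
  r x y := ∃ γ ∈ Γ, γ x = y
  iseqv := by
    refine ⟨fun x => ⟨1, Γ.one_mem, rfl⟩, ?_, ?_⟩
    · rintro x y ⟨γ, hγ, rfl⟩
      exact ⟨γ⁻¹, Γ.inv_mem hγ, γ.symm_apply_apply x⟩
    · rintro x y z ⟨γ, hγ, rfl⟩ ⟨δ, hδ, rfl⟩
      exact ⟨δ * γ, Γ.mul_mem hδ hγ, rfl⟩

end Homeomorph

namespace Homeomorph

section OrbitSpace

variable {X : Type*} [TopologicalSpace X] {Γ : Subgroup (X ≃ₜ X)}

theorem orbitSetoid_apply_of_mem_normalizer {f : X ≃ₜ X}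
    (hf : f ∈ Subgroup.normalizer (Γ : Set (X ≃ₜ X))) {x y : X} (hxy : orbitSetoid Γ x y) :
    orbitSetoid Γ (f x) (f y) := by
  obtain ⟨γ, hγ, rfl⟩ := hxy
  exact ⟨f * γ * f⁻¹, (hf γ).mp hγ, by simp⟩

theorem orbitSetoid_apply_iff_of_mem_normalizer {f : X ≃ₜ X}
    (hf : f ∈ Subgroup.normalizer (Γ : Set (X ≃ₜ X))) (x y : X) :
    orbitSetoid Γ x y ↔ orbitSetoid Γ (f x) (f y) := by
  refine ⟨orbitSetoid_apply_of_mem_normalizer hf, fun h => ?_⟩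
  simpa using orbitSetoid_apply_of_mem_normalizer (Subgroup.inv_mem _ hf) h

variable (Γ) in
def normalizerToOrbitSpace : Subgroup.normalizer (Γ : Set (X ≃ₜ X)) →*
    (Quotient (orbitSetoid Γ) ≃ₜ Quotient (orbitSetoid Γ)) where
  toFun f := Quotient.congr f (orbitSetoid_apply_iff_of_mem_normalizer f.2)
  map_one' := ext (Quotient.ind fun _ => rfl)
  map_mul' _ _ := ext (Quotient.ind fun _ => rfl)

end OrbitSpace

section ProductForm

variable {Q B : Type*} [TopologicalSpace Q] [TopologicalSpace B]

variable (Q) in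
def idProdHom : (B ≃ₜ B) →* ((Q × B) ≃ₜ (Q × B)) where
  toFun h := (Homeomorph.refl Q).prodCongr h
  map_one' := rfl
  map_mul' _ _ := rfl

@[simp]
theorem idProdHom_apply (h : B ≃ₜ B) (p : Q × B) : idProdHom Q h p = (p.1, h p.2) :=
  rfl

/-- The set `Ψ = {ψ_g : g ∈ Γ}` of the paper. -/
def sndFactors (Γ : Subgroup ((Q × B) ≃ₜ (Q × B))) : Set (B ≃ₜ B) :=
  {ψ | ∃ g ∈ Γ, ∃ φ : Q ≃ₜ Q, ∀ (z : Q) (y : B), g (z, y) = (φ z, ψ y)}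

variable {Γ : Subgroup ((Q × B) ≃ₜ (Q × B))}

theorem idProdHom_mem_centralizer
    (hprod : ∀ g ∈ Γ, ∃ (φ : Q ≃ₜ Q) (ψ : B ≃ₜ B), ∀ (z : Q) (y : B), g (z, y) = (φ z, ψ y))
    {h : B ≃ₜ B} (hh : h ∈ Subgroup.centralizer (sndFactors Γ)) :
    idProdHom Q h ∈ Subgroup.centralizer (Γ : Set ((Q × B) ≃ₜ (Q × B))) := by
  intro g hg
  obtain ⟨φ, ψ, hg_eq⟩ := hprod g hg
  have hψh : ∀ y, ψ (h y) = h (ψ y) := fun y =>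
    DFunLike.congr_fun (hh ψ ⟨g, hg, φ, hg_eq⟩) y
  ext ⟨z, y⟩ <;> simp [hg_eq, hψh]

variable (Γ) in
def centralizerToOrbitSpace
    (hprod : ∀ g ∈ Γ, ∃ (φ : Q ≃ₜ Q) (ψ : B ≃ₜ B), ∀ (z : Q) (y : B), g (z, y) = (φ z, ψ y)) :
    Subgroup.centralizer (sndFactors Γ) →*
      (Quotient (orbitSetoid Γ) ≃ₜ Quotient (orbitSetoid Γ)) :=
  (normalizerToOrbitSpace Γ).comp <| ((idProdHom Q).domRestrict _).codRestrict _ fun h =>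
    Subgroup.centralizer_le_normalizer _ (idProdHom_mem_centralizer hprod h.2)

end ProductForm

end Homeomorph

theorem centralizer_to_basic_automorphisms_general {Q B : Type*} [TopologicalSpace Q]
    [TopologicalSpace B] (Γ : Subgroup ((Q × B) ≃ₜ (Q × B)))
    (hprod : ∀ g ∈ Γ, ∃ (φ : Q ≃ₜ Q) (ψ : B ≃ₜ B), ∀ (z : Q) (y : B), g (z, y) = (φ z, ψ y)) :
    (∀ h ∈ Subgroup.centralizer
        {ψ : B ≃ₜ B | ∃ g ∈ Γ, ∃ φ : Q ≃ₜ Q, ∀ (z : Q) (y : B), g (z, y) = (φ z, ψ y)},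
      ∃! hbar : Quotient (Homeomorph.orbitSetoid Γ) ≃ₜ Quotient (Homeomorph.orbitSetoid Γ),
        ∀ p : Q × B, Quotient.mk (Homeomorph.orbitSetoid Γ) (p.1, h p.2) =
          hbar (Quotient.mk (Homeomorph.orbitSetoid Γ) p)) ∧
    ∃ Θ : ↥(Subgroup.centralizer
          {ψ : B ≃ₜ B | ∃ g ∈ Γ, ∃ φ : Q ≃ₜ Q, ∀ (z : Q) (y : B), g (z, y) = (φ z, ψ y)}) →*
        (Quotient (Homeomorph.orbitSetoid Γ) ≃ₜ Quotient (Homeomorph.orbitSetoid Γ)),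
      ∀ (h : ↥(Subgroup.centralizer
          {ψ : B ≃ₜ B | ∃ g ∈ Γ, ∃ φ : Q ≃ₜ Q, ∀ (z : Q) (y : B), g (z, y) = (φ z, ψ y)}))
        (p : Q × B),
        Quotient.mk (Homeomorph.orbitSetoid Γ) (p.1, (h : B ≃ₜ B) p.2) =
          Θ h (Quotient.mk (Homeomorph.orbitSetoid Γ) p) := by
  let Θ := Homeomorph.centralizerToOrbitSpace Γ hprod
  refine ⟨fun h hh => ⟨Θ ⟨h, hh⟩, fun _ => rfl, fun hbar hbar_spec => ?_⟩, Θ, fun _ _ => rfl⟩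
  exact Homeomorph.ext (Quotient.ind fun p => (hbar_spec p).symm)

/-- Let `Q` and `B` be nonempty topological spaces and `Γ` a subgroup of the homeomorphism
group of `Q × B` all of whose elements are of product form; let `Ψ := { ψ_g : g ∈ Γ }` and
let `Z(Ψ)` be the centralizer of `Ψ` in the homeomorphism group of `B`. For each
`h ∈ Z(Ψ)` there is a unique homeomorphism `h̄` of `(Q × B)/Γ` with
`κ ∘ (id_Q × h) = h̄ ∘ κ`, and the assignment `h ↦ h̄` is a group homomorphism from
`Z(Ψ)` to the homeomorphism group of `(Q × B)/Γ`. -/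
theorem centralizer_to_basic_automorphisms {Q B : Type*} [TopologicalSpace Q]
    [TopologicalSpace B] [Nonempty Q] [Nonempty B] (Γ : Subgroup ((Q × B) ≃ₜ (Q × B)))
    (hprod : ∀ g ∈ Γ, ∃ (φ : Q ≃ₜ Q) (ψ : B ≃ₜ B), ∀ (z : Q) (y : B), g (z, y) = (φ z, ψ y)) :
    (∀ h ∈ Subgroup.centralizer
        {ψ : B ≃ₜ B | ∃ g ∈ Γ, ∃ φ : Q ≃ₜ Q, ∀ (z : Q) (y : B), g (z, y) = (φ z, ψ y)},
      ∃! hbar : Quotient (Homeomorph.orbitSetoid Γ) ≃ₜ Quotient (Homeomorph.orbitSetoid Γ),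
        ∀ p : Q × B, Quotient.mk (Homeomorph.orbitSetoid Γ) (p.1, h p.2) =
          hbar (Quotient.mk (Homeomorph.orbitSetoid Γ) p)) ∧
    ∃ Θ : ↥(Subgroup.centralizer
          {ψ : B ≃ₜ B | ∃ g ∈ Γ, ∃ φ : Q ≃ₜ Q, ∀ (z : Q) (y : B), g (z, y) = (φ z, ψ y)}) →*
        (Quotient (Homeomorph.orbitSetoid Γ) ≃ₜ Quotient (Homeomorph.orbitSetoid Γ)),
      ∀ (h : ↥(Subgroup.centralizer
          {ψ : B ≃ₜ B | ∃ g ∈ Γ, ∃ φ : Q ≃ₜ Q, ∀ (z : Q) (y : B), g (z, y) = (φ z, ψ y)}))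
        (p : Q × B),
        Quotient.mk (Homeomorph.orbitSetoid Γ) (p.1, (h : B ≃ₜ B) p.2) =
          Θ h (Quotient.mk (Homeomorph.orbitSetoid Γ) p) :=
  centralizer_to_basic_automorphisms_general Γ hprod
end

section
/- Let X be a nonempty, simply connected, locally path-connected, locally compact Hausdorff space and Γ a subgroup of Homeomorph(X) acting freely and properly discontinuously, with quotient map κ : X → X/Γ. Then for any x₀ ∈ X the fundamental group of the orbit space X/Γ at the point κ(x₀) is isomorphic to the group Γ. -/
/-!
The quotient map `κ : X → X/Γ` is a covering map whose deck group is `Γ`: properness and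
freeness give every point a neighbourhood disjoint from all its nontrivial translates. Lifting
loops at `κ x₀` to paths starting at `x₀` sends each loop class to the element of `Γ` carrying
`x₀` to the endpoint of its lift. Since `X` is simply connected this is a bijection; it reverses
products, giving `π₁ ≃* Γᵐᵒᵖ`, and inversion identifies `Γᵐᵒᵖ` with `Γ`.
-/

namespace Homeomorph

variable {X : Type*} [TopologicalSpace X]

instance applyMulAction : MulAction (X ≃ₜ X) X where
  smul γ x := γ x
  one_smul _ := rfl
  mul_smul _ _ _ := rfl

variable (Γ : Subgroup (X ≃ₜ X))

instance : ContinuousConstSMul Γ X where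
  continuous_const_smul γ := (γ : X ≃ₜ X).continuous

theorem isCancelSMul_of_free (hfree : ∀ γ ∈ Γ, ∀ x : X, γ x = x → γ = 1) :
    IsCancelSMul Γ X :=
  isCancelSMul_iff_eq_one_of_smul_eq.2 fun γ x hx => Subtype.ext (hfree γ γ.2 x hx)

theorem properlyDiscontinuousSMul_of_finite
    (hpd : ∀ K L : Set X, IsCompact K → IsCompact L →
      {γ : X ≃ₜ X | γ ∈ Γ ∧ ((⇑γ '' K) ∩ L).Nonempty}.Finite) :
    ProperlyDiscontinuousSMul Γ X where
  finite_disjoint_inter_image {K L} hK hL :=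
    ((hpd K L hK hL).preimage Subtype.val_injective.injOn).subset fun γ hγ => ⟨γ.2, hγ⟩

theorem mk_orbitSetoid_eq_iff_mem_orbit {x y : X} :
    Quotient.mk (orbitSetoid Γ) x = Quotient.mk (orbitSetoid Γ) y ↔ x ∈ MulAction.orbit Γ y := by
  rw [Quotient.eq, Setoid.comm']
  exact ⟨fun ⟨γ, hγ, h⟩ => ⟨⟨γ, hγ⟩, h⟩, fun ⟨γ, h⟩ => ⟨γ, γ.2, h⟩⟩

theorem isQuotientCoveringMap_mk_orbitSetoid [LocallyCompactSpace X] [T2Space X]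
    (hfree : ∀ γ ∈ Γ, ∀ x : X, γ x = x → γ = 1)
    (hpd : ∀ K L : Set X, IsCompact K → IsCompact L →
      {γ : X ≃ₜ X | γ ∈ Γ ∧ ((⇑γ '' K) ∩ L).Nonempty}.Finite) :
    IsQuotientCoveringMap (Quotient.mk (orbitSetoid Γ)) Γ :=
  have := isCancelSMul_of_free Γ hfree
  have := properlyDiscontinuousSMul_of_finite Γ hpd
  isQuotientMap_quotient_mk'.isQuotientCoveringMap_of_properlyDiscontinuousSMul
    (mk_orbitSetoid_eq_iff_mem_orbit Γ)

end Homeomorph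

theorem fundamentalGroup_of_orbit_space_general {X : Type*} [TopologicalSpace X]
    [SimplyConnectedSpace X] [LocallyCompactSpace X] [T2Space X]
    (Γ : Subgroup (X ≃ₜ X))
    (hfree : ∀ γ ∈ Γ, ∀ x : X, γ x = x → γ = 1)
    (hpd : ∀ K L : Set X, IsCompact K → IsCompact L →
      {γ : X ≃ₜ X | γ ∈ Γ ∧ ((⇑γ '' K) ∩ L).Nonempty}.Finite)
    (x₀ : X) :
    Nonempty (FundamentalGroup (Quotient (Homeomorph.orbitSetoid Γ))
        (Quotient.mk (Homeomorph.orbitSetoid Γ) x₀) ≃* Γ) :=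
  ⟨((Homeomorph.isQuotientCoveringMap_mk_orbitSetoid Γ hfree hpd).fundamentalGroupEquiv
    ⟨x₀, rfl⟩).trans (MulEquiv.inv' Γ).symm⟩

/-- Let `X` be a nonempty, simply connected, locally path-connected, locally compact
Hausdorff space and `Γ` a subgroup of the homeomorphism group of `X` acting freely and
properly discontinuously, with quotient map `κ : X → X/Γ`. Then for any `x₀ ∈ X` the
fundamental group of the orbit space `X/Γ` at the point `κ(x₀)` is isomorphic to `Γ`. -/
theorem fundamentalGroup_of_orbit_space {X : Type*} [TopologicalSpace X] [Nonempty X]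
    [SimplyConnectedSpace X] [LocallyPathConnectedSpace X] [LocallyCompactSpace X] [T2Space X]
    (Γ : Subgroup (X ≃ₜ X))
    (hfree : ∀ γ ∈ Γ, ∀ x : X, γ x = x → γ = 1)
    (hpd : ∀ K L : Set X, IsCompact K → IsCompact L →
      {γ : X ≃ₜ X | γ ∈ Γ ∧ ((⇑γ '' K) ∩ L).Nonempty}.Finite)
    (x₀ : X) :
    Nonempty (FundamentalGroup (Quotient (Homeomorph.orbitSetoid Γ))
        (Quotient.mk (Homeomorph.orbitSetoid Γ) x₀) ≃* Γ) :=
  fundamentalGroup_of_orbit_space_general Γ hfree hpd x₀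
end
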